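/- If G is a nonempty graph having a unique minimum dominating set, then b(G) = 1. -/
import Mathlib


open SimpleGraph

variable {V : Type*}

/-- `S` is a dominating set of `G`: every vertex is in `S` or has a neighbor in `S`. -/
def SimpleGraph.IsDomSet (G : SimpleGraph V) (S : Finset V) : Prop :=
  ∀ v : V, v ∈ S ∨ ∃ u ∈ S, G.Adj u v

/-- The domination number of a finite graph. -/
noncomputable def SimpleGraph.domNum [Fintype V] (G : SimpleGraph V) : ℕ :=
  sInf {n | ∃ S : Finset V, S.card = n ∧ G.IsDomSet S}

/-- The bondage number: the minimum size of a set of edges of `G` whose removal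
increases the domination number. -/
noncomputable def SimpleGraph.bondageNum [Fintype V] (G : SimpleGraph V) : ℕ :=
  sInf {n | ∃ B : Finset (Sym2 V), B.card = n ∧ ↑B ⊆ G.edgeSet ∧
    G.domNum < (G.deleteEdges ↑B).domNum}

lemma domNum_set_nonempty [Fintype V] (G : SimpleGraph V) :
    {n | ∃ S : Finset V, S.card = n ∧ G.IsDomSet S}.Nonempty :=
  ⟨Finset.univ.card, Finset.univ, rfl, fun v => Or.inl (Finset.mem_univ v)⟩

lemma exists_min_domSet [Fintype V] (G : SimpleGraph V) :
    ∃ S : Finset V, S.card = G.domNum ∧ G.IsDomSet S :=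
  Nat.sInf_mem (domNum_set_nonempty G)

lemma domNum_le_card [Fintype V] (G : SimpleGraph V) {S : Finset V} (hS : G.IsDomSet S) :
    G.domNum ≤ S.card :=
  Nat.sInf_le ⟨S, rfl, hS⟩

theorem bondage_of_unique_min_domSet [Fintype V] (G : SimpleGraph V)
    (hE : G.edgeSet.Nonempty)
    (huniq : ∃! S : Finset V, S.card = G.domNum ∧ G.IsDomSet S) :
    G.bondageNum = 1 := by
  classical
  obtain ⟨S, ⟨hScard, hSdom⟩, huni⟩ := huniq
  -- Claim: some vertex outside S has a unique neighbor in S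
  have hclaim : ∃ v ∉ S, ∃ u ∈ S, G.Adj u v ∧ ∀ u' ∈ S, G.Adj u' v → u' = u := by
    by_contra h
    push_neg at h
    -- every vertex outside S with an S-neighbor has a second S-neighbor
    have h2 : ∀ v ∉ S, ∀ u ∈ S, G.Adj u v → ∃ u' ∈ S, G.Adj u' v ∧ u' ≠ u := by
      intro v hv u hu hadj
      obtain ⟨u', hu', hadj', hne⟩ := h v hv u hu hadj
      exact ⟨u', hu', hadj', hne⟩
    -- find u ∈ S with some neighbor w
    obtain ⟨e, he⟩ := hE
    induction e with
    | h a b =>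
      rw [SimpleGraph.mem_edgeSet] at he
      have hex : ∃ u ∈ S, ∃ w, G.Adj u w := by
        by_cases ha : a ∈ S
        · exact ⟨a, ha, b, he⟩
        · rcases hSdom a with h1 | ⟨u, hu, hadj⟩
          · exact absurd h1 ha
          · exact ⟨u, hu, a, hadj⟩
      obtain ⟨u, hu, w, huw⟩ := hex
      have hwu : w ≠ u := fun hh => G.irrefl (hh ▸ huw)
      by_cases hw : w ∈ S
      · -- S.erase u is a smaller dominating set, contradiction
        have hdom : G.IsDomSet (S.erase u) := by
          intro v
          by_cases hvu : v = u
          · exact Or.inr ⟨w, Finset.mem_erase.2 ⟨hwu, hw⟩, hvu ▸ huw.symm⟩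
          · by_cases hvS : v ∈ S
            · exact Or.inl (Finset.mem_erase.2 ⟨hvu, hvS⟩)
            · rcases hSdom v with h1 | ⟨u₁, hu₁, hadj₁⟩
              · exact absurd h1 hvS
              · by_cases hu₁u : u₁ = u
                · obtain ⟨u', hu', hadj', hne⟩ := h2 v hvS u₁ hu₁ hadj₁
                  exact Or.inr ⟨u', Finset.mem_erase.2 ⟨hu₁u ▸ hne, hu'⟩, hadj'⟩
                · exact Or.inr ⟨u₁, Finset.mem_erase.2 ⟨hu₁u, hu₁⟩, hadj₁⟩
        have hle := domNum_le_card G hdom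
        rw [Finset.card_erase_of_mem hu, hScard] at hle
        have hpos : 0 < G.domNum := hScard ▸ Finset.card_pos.2 ⟨u, hu⟩
        omega
      · -- insert w (S.erase u) is another γ-set ≠ S, contradiction
        set T := insert w (S.erase u) with hT
        have hwT : w ∉ S.erase u := fun hh => hw (Finset.mem_of_mem_erase hh)
        have hTcard : T.card = G.domNum := by
          rw [hT, Finset.card_insert_of_notMem hwT, Finset.card_erase_of_mem hu, hScard]
          have hpos : 0 < G.domNum := hScard ▸ Finset.card_pos.2 ⟨u, hu⟩
          omega
        have hTdom : G.IsDomSet T := by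
          intro v
          by_cases hvu : v = u
          · exact Or.inr ⟨w, Finset.mem_insert_self _ _, hvu ▸ huw.symm⟩
          · by_cases hvS : v ∈ S
            · exact Or.inl (Finset.mem_insert_of_mem (Finset.mem_erase.2 ⟨hvu, hvS⟩))
            · by_cases hvw : v = w
              · exact Or.inl (hvw ▸ Finset.mem_insert_self _ _)
              · rcases hSdom v with h1 | ⟨u₁, hu₁, hadj₁⟩
                · exact absurd h1 hvS
                · by_cases hu₁u : u₁ = u
                  · obtain ⟨u', hu', hadj', hne⟩ := h2 v hvS u₁ hu₁ hadj₁
                    exact Or.inr ⟨u', Finset.mem_insert_of_mem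
                      (Finset.mem_erase.2 ⟨hu₁u ▸ hne, hu'⟩), hadj'⟩
                  · exact Or.inr ⟨u₁, Finset.mem_insert_of_mem
                      (Finset.mem_erase.2 ⟨hu₁u, hu₁⟩), hadj₁⟩
        have hTS : T = S := huni T ⟨hTcard, hTdom⟩
        have : u ∈ T := hTS ▸ hu
        rcases Finset.mem_insert.1 this with h1 | h1
        · exact hw (h1 ▸ hu)
        · exact (Finset.mem_erase.1 h1).1 rfl
  obtain ⟨v, hv, u, hu, hadj, huniqnbr⟩ := hclaim
  -- the single-edge set B = {s(u,v)}
  set B : Finset (Sym2 V) := {s(u, v)} with hB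
  have hkey : G.domNum < (G.deleteEdges ↑B).domNum := by
    by_contra hlt
    push_neg at hlt
    obtain ⟨T, hTcard, hTdom⟩ := exists_min_domSet (G.deleteEdges ↑B)
    have hTdomG : G.IsDomSet T := by
      intro x
      rcases hTdom x with h1 | ⟨u', hu', hadj'⟩
      · exact Or.inl h1
      · exact Or.inr ⟨u', hu', (SimpleGraph.deleteEdges_adj.1 hadj').1⟩
    have hge : G.domNum ≤ T.card := domNum_le_card G hTdomG
    have hcard : T.card = G.domNum := le_antisymm (hTcard ▸ hlt) hge
    have hTS : T = S := huni T ⟨hcard, hTdomG⟩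
    subst hTS
    rcases hTdom v with h1 | ⟨u', hu', hadj'⟩
    · exact hv h1
    · obtain ⟨hGadj, hnotin⟩ := SimpleGraph.deleteEdges_adj.1 hadj'
      have : u' = u := huniqnbr u' hu' hGadj
      subst this
      exact hnotin (by simp [hB])
  have h1mem : 1 ∈ {n | ∃ B : Finset (Sym2 V), B.card = n ∧ ↑B ⊆ G.edgeSet ∧
      G.domNum < (G.deleteEdges ↑B).domNum} := by
    refine ⟨B, by simp [hB], ?_, hkey⟩
    intro e he
    simp only [hB, Finset.coe_singleton, Set.mem_singleton_iff] at he
    rw [he, SimpleGraph.mem_edgeSet]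
    exact hadj
  refine le_antisymm (Nat.sInf_le h1mem) ?_
  rw [Nat.one_le_iff_ne_zero]
  intro h0
  rcases (Nat.sInf_eq_zero.1 h0) with h1 | h1
  · obtain ⟨B', hB'card, _, hB'lt⟩ := h1
    rw [Finset.card_eq_zero] at hB'card
    subst hB'card
    simp only [Finset.coe_empty, SimpleGraph.deleteEdges_empty] at hB'lt
    exact lt_irrefl _ hB'lt
  · exact absurd h1mem (h1 ▸ Set.notMem_empty 1)
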